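/- In the DivE framework with M = 2, assume every CN has degree at least 2. If a VN v_i attains full diversity at some iteration ℓ ≥ 1 (i.e., F^ℓ_i = FD), then v_i retains full diversity at every later iteration: F^{ℓ'}_i = FD for all ℓ' ≥ ℓ. In particular the final Boolean fading function of v_i equals FD. (This persistence property is what allows the paper to speak of a VN 'achieving' full diversity once it becomes the root node of a generalized rootcheck.) -/
import Mathlib


namespace DivE

/-- VN→CN DivE message functions: `VtoC H π ℓ i j a` is `F^ℓ_{v i → c j}(a)`.
`F⁰_{v i → c j}(a) = a (π i)`; for `ℓ ≥ 1`,
`F^ℓ_{v i → c j}(a) = a (π i) || OR_{j' ≠ j, H j' i} (AND_{u ≠ i, H j' u} F^{ℓ-1}_{v u → c j'}(a))`. -/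
noncomputable def VtoC {M c n : ℕ} (H : Fin c → Fin n → Bool) (π : Fin n → Fin M) :
    ℕ → Fin n → Fin c → (Fin M → Bool) → Bool
  | 0, i, _, a => a (π i)
  | ℓ + 1, i, j, a =>
      a (π i) ||
        (Finset.univ.filter fun j' : Fin c => j' ≠ j ∧ H j' i = true).sup fun j' =>
          (Finset.univ.filter fun u : Fin n => u ≠ i ∧ H j' u = true).inf fun u =>
            VtoC H π ℓ u j' a

/-- CN→VN DivE message functions: `CtoV H π ℓ j i a` is `F^ℓ_{c j → v i}(a)`, meaningful
for `ℓ ≥ 1`: the AND over all `u ≠ i` with `H j u = true` of `F^{ℓ-1}_{v u → c j}(a)`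
(`true` if there is no such `u`). -/
noncomputable def CtoV {M c n : ℕ} (H : Fin c → Fin n → Bool) (π : Fin n → Fin M)
    (ℓ : ℕ) (j : Fin c) (i : Fin n) (a : Fin M → Bool) : Bool :=
  (Finset.univ.filter fun u : Fin n => u ≠ i ∧ H j u = true).inf fun u =>
    VtoC H π (ℓ - 1) u j a

/-- A posteriori DivE function: `apost H π ℓ i a` is `F^ℓ_i(a)`, meaningful for `ℓ ≥ 1`:
`a (π i)` OR the OR over all `j` with `H j i = true` of `F^ℓ_{c j → v i}(a)`. -/
noncomputable def apost {M c n : ℕ} (H : Fin c → Fin n → Bool) (π : Fin n → Fin M)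
    (ℓ : ℕ) (i : Fin n) (a : Fin M → Bool) : Bool :=
  a (π i) || (Finset.univ.filter fun j : Fin c => H j i = true).sup fun j => CtoV H π ℓ j i a

/-- The full-diversity Boolean fading function for `M = 2`. -/
def FD (a : Fin 2 → Bool) : Bool := a 0 || a 1

/-- Every CN has degree at least 2. -/
def degTwo {c n : ℕ} (H : Fin c → Fin n → Bool) : Prop :=
  ∀ j : Fin c, ∃ i i' : Fin n, i ≠ i' ∧ H j i = true ∧ H j i' = true

/-- `c j` is a generalized rootcheck for `v i` at iteration `ℓ ≥ 1`:
`H j i = true` and there is a block `m'` distinct from `m := π i` such that every other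
neighboring VN `u` of `c j` has message `F^{ℓ-1}_{v u → c j}` equal to `(a ↦ a m')` or to `FD`. -/
def GenRootcheck {c n : ℕ} (H : Fin c → Fin n → Bool) (π : Fin n → Fin 2)
    (ℓ : ℕ) (j : Fin c) (i : Fin n) : Prop :=
  H j i = true ∧
    ∃ m' : Fin 2, m' ≠ π i ∧
      ∀ u : Fin n, u ≠ i → H j u = true →
        VtoC H π (ℓ - 1) u j = (fun a => a m') ∨ VtoC H π (ℓ - 1) u j = FD


lemma apply_le_FD (a : Fin 2 → Bool) (m : Fin 2) : a m ≤ FD a := by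
  fin_cases m <;> cases h0 : a 0 <;> cases h1 : a 1 <;> simp [FD, h0, h1]

lemma or_le_or' {x y z w : Bool} (h1 : x ≤ z) (h2 : y ≤ w) : (x || y) ≤ (z || w) :=
  sup_le_sup h1 h2

lemma VtoC_mono_succ {c n : ℕ} (H : Fin c → Fin n → Bool) (π : Fin n → Fin 2) :
    ∀ (ℓ : ℕ) (i : Fin n) (j : Fin c) (a : Fin 2 → Bool),
      VtoC H π ℓ i j a ≤ VtoC H π (ℓ + 1) i j a := by
  intro ℓ
  induction ℓ with
  | zero =>
    intro i j a
    show VtoC H π 0 i j a ≤ VtoC H π 1 i j a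
    rw [VtoC, VtoC]
    exact le_sup_left
  | succ ℓ ih =>
    intro i j a
    rw [VtoC, VtoC]
    apply sup_le_sup le_rfl
    apply Finset.sup_mono_fun
    intro j' _
    apply Finset.inf_mono_fun
    intro u _
    exact ih u j' a

lemma VtoC_mono {c n : ℕ} (H : Fin c → Fin n → Bool) (π : Fin n → Fin 2)
    {ℓ ℓ' : ℕ} (h : ℓ ≤ ℓ') (i : Fin n) (j : Fin c) (a : Fin 2 → Bool) :
    VtoC H π ℓ i j a ≤ VtoC H π ℓ' i j a := by
  induction ℓ' with
  | zero => simp_all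
  | succ k ih =>
    rcases Nat.lt_or_ge ℓ (k+1) with hk | hk
    · exact le_trans (ih (Nat.lt_succ_iff.mp hk)) (VtoC_mono_succ H π k i j a)
    · have : ℓ = k + 1 := le_antisymm h hk
      subst this; exact le_rfl

lemma degTwo_other {c n : ℕ} {H : Fin c → Fin n → Bool} (hdeg : degTwo H)
    (j : Fin c) (i : Fin n) : ∃ u : Fin n, u ≠ i ∧ H j u = true := by
  obtain ⟨i1, i2, hne, h1, h2⟩ := hdeg j
  by_cases h : i1 = i
  · exact ⟨i2, by rw [← h]; exact hne.symm, h2⟩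
  · exact ⟨i1, h, h1⟩

lemma VtoC_le_FD {c n : ℕ} {H : Fin c → Fin n → Bool} {π : Fin n → Fin 2}
    (hdeg : degTwo H) :
    ∀ (ℓ : ℕ) (i : Fin n) (j : Fin c) (a : Fin 2 → Bool),
      VtoC H π ℓ i j a ≤ FD a := by
  intro ℓ
  induction ℓ with
  | zero => intro i j a; rw [VtoC]; exact apply_le_FD a (π i)
  | succ ℓ ih =>
    intro i j a
    rw [VtoC]
    apply sup_le (apply_le_FD a (π i))
    apply Finset.sup_le
    intro j' hj'
    simp only [Finset.mem_filter, Finset.mem_univ, true_and] at hj'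
    obtain ⟨u, hu, hju⟩ := degTwo_other hdeg j' i
    refine le_trans (Finset.inf_le (b := u) ?_) (ih u j' a)
    simp [Finset.mem_filter, hu, hju]

lemma CtoV_le_FD {c n : ℕ} {H : Fin c → Fin n → Bool} {π : Fin n → Fin 2}
    (hdeg : degTwo H) (ℓ : ℕ) (j : Fin c) (i : Fin n) (a : Fin 2 → Bool) :
    CtoV H π ℓ j i a ≤ FD a := by
  obtain ⟨u, hu, hju⟩ := degTwo_other hdeg j i
  refine le_trans (Finset.inf_le (b := u) ?_) (VtoC_le_FD hdeg _ u j a)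
  simp [Finset.mem_filter, hu, hju]

lemma apost_le_FD {c n : ℕ} {H : Fin c → Fin n → Bool} {π : Fin n → Fin 2}
    (hdeg : degTwo H) (ℓ : ℕ) (i : Fin n) (a : Fin 2 → Bool) :
    apost H π ℓ i a ≤ FD a := by
  apply sup_le (apply_le_FD a (π i))
  exact Finset.sup_le fun j _ => CtoV_le_FD hdeg ℓ j i a

lemma apost_mono {c n : ℕ} (H : Fin c → Fin n → Bool) (π : Fin n → Fin 2)
    {ℓ ℓ' : ℕ} (h : ℓ ≤ ℓ') (i : Fin n) (a : Fin 2 → Bool) :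
    apost H π ℓ i a ≤ apost H π ℓ' i a := by
  apply sup_le_sup le_rfl
  apply Finset.sup_mono_fun
  intro j _
  apply Finset.inf_mono_fun
  intro u _
  exact VtoC_mono H π (Nat.sub_le_sub_right h 1) u j a

/-- Persistence of full diversity: once a VN attains full diversity at some
iteration `ℓ ≥ 1`, it retains it at every later iteration. -/
theorem full_diversity_persists {c n : ℕ} (H : Fin c → Fin n → Bool)
    (π : Fin n → Fin 2) (hdeg : degTwo H) (i : Fin n) (ℓ : ℕ) (hℓ : 1 ≤ ℓ)
    (hfd : apost H π ℓ i = FD) :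
    ∀ ℓ' : ℕ, ℓ ≤ ℓ' → apost H π ℓ' i = FD := by
  intro ℓ' hle
  funext a
  apply le_antisymm
  · exact apost_le_FD hdeg ℓ' i a
  · calc FD a = apost H π ℓ i a := by rw [hfd]
      _ ≤ apost H π ℓ' i a := apost_mono H π hle i a
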